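/- The contiguous relation (12) holds: (e−b−1) · Ψ_{p1}[a,b,c,d; a', e−b | e; c', e−b−1; σ,θ,ρ] = (e−1) · Ψ_{p0}[a,b,c,d−1; a' | e−1; c'; σ,θ,ρ] − b · Ψ_{p0}[a,b+1,c,d; a' | e; c'; σ,θ,ρ], as an identity of convergent series for |σ| < 1, |θ| < 1, coefficientwise in σ^m ρ^k it reduces to a contiguous relation between Gauss hypergeometric functions. -/

import Mathlib

open Complex

/-- Pochhammer symbol `(a)_n = a(a+1)⋯(a+n-1)` for complex `a`. -/
noncomputable def poch (a : ℂ) (n : ℕ) : ℂ := (ascPochhammer ℂ n).eval a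

/-- `c` is not a nonpositive integer `0, -1, -2, …`. -/
def notNonposInt (c : ℂ) : Prop := ∀ n : ℕ, c ≠ -(n : ℂ)

/-- Confluent hypergeometric series `Ξ₂(a,b;c;σ,ρ)`. -/
noncomputable def Xi2 (a b c σ ρ : ℂ) : ℂ :=
  ∑' mk : ℕ × ℕ, poch a mk.1 * poch b mk.1 /
    ((mk.1.factorial : ℂ) * (mk.2.factorial : ℂ) * poch c (mk.1 + mk.2)) * σ ^ mk.1 * ρ ^ mk.2

/-- Series `Ξ₁₀[a,b;a' | c; c'; σ,ρ]`. -/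
noncomputable def Xi10 (a b a' c c' σ ρ : ℂ) : ℂ :=
  ∑' mk : ℕ × ℕ, poch a mk.1 * poch b mk.1 * poch a' mk.2 /
    ((mk.1.factorial : ℂ) * (mk.2.factorial : ℂ) * poch c (mk.1 + mk.2) * poch c' mk.2) *
    σ ^ mk.1 * ρ ^ mk.2

/-- Triple hypergeometric series `Φ[a,b,c,d;e;σ,ω,ρ]`. -/
noncomputable def Phi3 (a b c d e σ ω ρ : ℂ) : ℂ :=
  ∑' t : ℕ × ℕ × ℕ, poch a t.1 * poch b t.2.1 * poch c t.1 * poch d t.2.1 /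
    ((t.1.factorial : ℂ) * (t.2.1.factorial : ℂ) * (t.2.2.factorial : ℂ) *
      poch e (t.1 + t.2.1 + t.2.2)) *
    σ ^ t.1 * ω ^ t.2.1 * ρ ^ t.2.2

/-- Gauss hypergeometric series `F(a,b;c;θ)`. -/
noncomputable def GaussF (a b c θ : ℂ) : ℂ :=
  ∑' n : ℕ, poch a n * poch b n / ((n.factorial : ℂ) * poch c n) * θ ^ n

/-- Series `Ξ_{pq}[a,b;a',b' | c; c',d'; σ,ρ]`, `p, q ∈ {0,1}`. -/
noncomputable def XiPQ (p q : ℕ) (a b a' b' c c' d' σ ρ : ℂ) : ℂ :=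
  ∑' mk : ℕ × ℕ, poch a mk.1 * poch b mk.1 * poch a' (p * mk.2) * poch b' (q * (mk.1 + mk.2)) /
    ((mk.1.factorial : ℂ) * (mk.2.factorial : ℂ) * poch c (mk.1 + mk.2) *
      poch c' (p * mk.2) * poch d' (q * (mk.1 + mk.2))) *
    σ ^ mk.1 * ρ ^ mk.2

/-- Series `Ψ_{pq}[a,b,c,d;a',b' | e; c',d'; σ,θ,ρ]`, `p, q ∈ {0,1}`. -/
noncomputable def PsiPQ (p q : ℕ) (a b c d a' b' e c' d' σ θ ρ : ℂ) : ℂ :=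
  ∑' mk : ℕ × ℕ, poch a mk.1 * poch c mk.1 * poch a' (p * mk.2) * poch b' (q * (mk.1 + mk.2)) /
    ((mk.1.factorial : ℂ) * (mk.2.factorial : ℂ) * poch e (mk.1 + mk.2) *
      poch c' (p * mk.2) * poch d' (q * (mk.1 + mk.2))) *
    GaussF b (e - d + (mk.1 : ℂ) + (mk.2 : ℂ)) (e + (mk.1 : ℂ) + (mk.2 : ℂ)) θ *
    σ ^ mk.1 * ρ ^ mk.2

open Filter Finset


lemma poch_eval_zero (x : ℂ) : poch x 0 = 1 := by simp [poch]

lemma poch_succ (x : ℂ) (n : ℕ) : poch x (n+1) = poch x n * (x + n) :=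
  ascPochhammer_succ_eval n x

lemma poch_succ_left (x : ℂ) (n : ℕ) : poch x (n+1) = x * poch (x+1) n := by
  simp [poch, ascPochhammer_succ_left, Polynomial.eval_mul, Polynomial.eval_comp]

lemma poch_shift (x : ℂ) (n : ℕ) : x * poch (x+1) n = poch x n * (x + n) := by
  rw [← poch_succ_left, poch_succ]

lemma poch_prod (x : ℂ) (n : ℕ) : poch x n = ∏ i ∈ range n, (x + i) := by
  induction n with
  | zero => simp [poch_eval_zero]
  | succ n ih => rw [poch_succ, ih, prod_range_succ]

lemma poch_add (x : ℂ) (m k : ℕ) : poch x (m+k) = poch x m * poch (x + m) k := by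
  have h := congrArg (Polynomial.eval x) (ascPochhammer_mul ℂ m k)
  simpa [poch, Polynomial.eval_mul, Polynomial.eval_comp] using h.symm

lemma nn_add_nat {x : ℂ} (h : notNonposInt x) (s : ℕ) : x + s ≠ 0 := by
  intro h0
  exact h s (by linear_combination h0)

lemma nn_shift {x : ℂ} (h : notNonposInt x) (s : ℕ) : notNonposInt (x + s) := by
  intro n hn
  apply h (s + n)
  push_cast
  linear_combination hn

lemma poch_ne_zero {x : ℂ} (h : notNonposInt x) (n : ℕ) : poch x n ≠ 0 := by
  rw [poch_prod]
  exact Finset.prod_ne_zero_iff.mpr fun i _ => nn_add_nat h i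

lemma norm_poch_eq (x : ℂ) (n : ℕ) : ‖poch x n‖ = ∏ i ∈ range n, ‖x + i‖ := by
  rw [poch_prod, norm_prod]


lemma prod_le_factorial_mul_pow (x : ℝ) (hx0 : 0 ≤ x) (q : ℕ) (hx : x ≤ q) (j : ℕ) :
    ∏ i ∈ range j, (x + i) ≤ (j.factorial : ℝ) * ((j:ℝ)+1)^q := by
  induction j with
  | zero => simp
  | succ j ih =>
    rw [prod_range_succ]
    have h1 : (0:ℝ) ≤ ∏ i ∈ range j, (x + i) := prod_nonneg fun i _ => by positivity
    have hfq : (0:ℝ) ≤ (j.factorial : ℝ) * ((j:ℝ)+1)^q := by positivity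
    have hy : (0:ℝ) < (j:ℝ) + 1 := by positivity
    have hB := one_add_mul_le_pow (a := 1/((j:ℝ)+1)) (le_trans (by norm_num : (-2:ℝ) ≤ 0) (by positivity)) q
    have hsub : ((j:ℝ)+2) = ((j:ℝ)+1)*(1+1/((j:ℝ)+1)) := by field_simp; ring
    have h3 : ((j:ℝ)+1)^q * (1 + (q:ℝ)*(1/((j:ℝ)+1))) ≤ ((j:ℝ)+2)^q := by
      rw [hsub, mul_pow]
      exact mul_le_mul_of_nonneg_left hB (by positivity)
    have h5 : ((j:ℝ)+1)*(1+(q:ℝ)*(1/((j:ℝ)+1))) = ((j:ℝ)+1) + q := by field_simp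
    have h4 : ((j:ℝ)+1)^q * ((q:ℝ) + (j:ℝ)) ≤ ((j:ℝ)+1) * ((j:ℝ)+2)^q := by
      have := mul_le_mul_of_nonneg_left h3 hy.le
      nlinarith [pow_nonneg hy.le q]
    calc (∏ i ∈ range j, (x + i)) * (x + j)
        ≤ ((j.factorial : ℝ) * ((j:ℝ)+1)^q) * ((q:ℝ) + (j:ℝ)) := by
          apply mul_le_mul ih (by linarith) (by linarith) hfq
      _ ≤ (j.factorial : ℝ) * (((j:ℝ)+1) * ((j:ℝ)+2)^q) := by
          rw [mul_assoc]
          exact mul_le_mul_of_nonneg_left h4 (by positivity)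
      _ = ((j+1).factorial : ℝ) * (((j+1:ℕ):ℝ)+1)^q := by
          rw [Nat.factorial_succ]; push_cast; ring


lemma tendsto_norm_add_div (x : ℂ) :
    Tendsto (fun n : ℕ => ‖x + (n:ℂ)‖ / ((n:ℝ) + 1)) atTop (nhds 1) := by
  rw [tendsto_iff_dist_tendsto_zero]
  apply squeeze_zero (g := fun n : ℕ => ‖x - 1‖ / ((n:ℝ)+1)) (fun n => dist_nonneg)
  · intro n
    have hpos : (0:ℝ) < (n:ℝ)+1 := by positivity
    rw [Real.dist_eq]
    have h1 : ‖x + (n:ℂ)‖/((n:ℝ)+1) - 1 = (‖x + (n:ℂ)‖ - ((n:ℝ)+1))/((n:ℝ)+1) := by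
      field_simp
    rw [h1, abs_div, abs_of_pos hpos]
    gcongr
    have h2 : ‖(1:ℂ) + (n:ℂ)‖ = (n:ℝ)+1 := by
      rw [show (1:ℂ) + (n:ℂ) = ((n+1 : ℕ) : ℂ) by push_cast; ring, Complex.norm_natCast]
      push_cast; ring
    calc |‖x + (n:ℂ)‖ - ((n:ℝ)+1)| = |‖x + (n:ℂ)‖ - ‖(1:ℂ)+(n:ℂ)‖| := by rw [h2]
      _ ≤ ‖(x+(n:ℂ)) - (1+(n:ℂ))‖ := abs_norm_sub_norm_le _ _
      _ = ‖x - 1‖ := by ring_nf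
  · have h := tendsto_one_div_add_atTop_nhds_zero_nat.const_mul ‖x-1‖
    simpa [div_eq_mul_inv] using h

lemma tendsto_nat_div_norm_add (z : ℂ) :
    Tendsto (fun n : ℕ => ((n:ℝ)+1) / ‖z + (n:ℂ)‖) atTop (nhds 1) := by
  have h := (tendsto_norm_add_div z).inv₀ one_ne_zero
  simpa [inv_div] using h

lemma tendsto_inv_norm_add (z : ℂ) :
    Tendsto (fun n : ℕ => 1 / ‖z + (n:ℂ)‖) atTop (nhds 0) := by
  have h := (tendsto_nat_div_norm_add z).mul tendsto_one_div_add_atTop_nhds_zero_nat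
  rw [show (1:ℝ)*0 = 0 by ring] at h
  apply h.congr
  intro n
  by_cases hz : ‖z + (n:ℂ)‖ = 0
  · simp [hz]
  · have hn : ((n:ℝ)+1) ≠ 0 := by positivity
    rw [div_mul_div_comm, mul_one, ← div_div, div_right_comm, div_self hn]


lemma summable_of_ratio_tendsto {f : ℕ → ℂ} {g : ℕ → ℝ} {L : ℝ} (hL : L < 1)
    (hrec : ∀ n, ‖f (n+1)‖ = g n * ‖f n‖) (hg : Tendsto g atTop (nhds L)) : Summable f := by
  apply summable_of_ratio_norm_eventually_le (show (L+1)/2 < 1 by linarith)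
  filter_upwards [hg.eventually_lt_const (show L < (L+1)/2 by linarith)] with n hn
  rw [hrec n]
  exact mul_le_mul_of_nonneg_right hn.le (norm_nonneg _)

lemma norm_natCast_add_one (n : ℕ) : ‖((n:ℂ)+1)‖ = (n:ℝ)+1 := by
  rw [show (n:ℂ) + 1 = ((n+1 : ℕ) : ℂ) by push_cast; ring, Complex.norm_natCast]
  push_cast; ring

lemma summable_gauss (α β γ θ : ℂ) (hθ : ‖θ‖ < 1) (hγ : notNonposInt γ) :
    Summable (fun j : ℕ => poch α j * poch β j / ((j.factorial:ℂ) * poch γ j) * θ^j) := by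
  apply summable_of_ratio_tendsto (L := ‖θ‖) hθ
    (g := fun j => (‖α+(j:ℂ)‖/((j:ℝ)+1)) * (‖β+(j:ℂ)‖/‖γ+(j:ℂ)‖) * ‖θ‖)
  · intro n
    have h1 : poch γ n ≠ 0 := poch_ne_zero hγ n
    have h2 : γ + (n:ℂ) ≠ 0 := nn_add_nat hγ n
    have h3 : ((n.factorial : ℂ)) ≠ 0 := Nat.cast_ne_zero.mpr n.factorial_ne_zero
    have h4 : ((n:ℂ)+1) ≠ 0 := by
      intro h0
      have := congrArg Complex.re h0
      push_cast at this
      simp at this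
      linarith [Nat.cast_nonneg (α := ℝ) n, this]
    have key : poch α (n+1) * poch β (n+1) / (((n+1).factorial:ℂ) * poch γ (n+1)) * θ^(n+1)
        = poch α n * poch β n / ((n.factorial:ℂ) * poch γ n) * θ^n
          * ((α+(n:ℂ)) * (β+(n:ℂ)) * θ / (((n:ℂ)+1) * (γ+(n:ℂ)))) := by
      rw [poch_succ, poch_succ, poch_succ, Nat.factorial_succ, pow_succ]
      push_cast
      field_simp
    rw [key]
    simp only [norm_mul, norm_div, norm_natCast_add_one]
    have hz : ‖γ + (n:ℂ)‖ ≠ 0 := norm_ne_zero_iff.mpr h2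
    have hpg : ‖poch γ n‖ ≠ 0 := norm_ne_zero_iff.mpr h1
    have hnf : ‖((n.factorial:ℂ))‖ ≠ 0 := norm_ne_zero_iff.mpr h3
    have hn1 : ((n:ℝ)+1) ≠ 0 := by positivity
    field_simp
  · have t1 := tendsto_norm_add_div α
    have t2 : Tendsto (fun j:ℕ => ‖β+(j:ℂ)‖/‖γ+(j:ℂ)‖) atTop (nhds 1) := by
      have h := (tendsto_norm_add_div β).div (tendsto_norm_add_div γ) one_ne_zero
      rw [show (1:ℝ)/1 = 1 by norm_num] at h
      apply h.congr
      intro j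
      have hz : ‖γ + (j:ℂ)‖ ≠ 0 := norm_ne_zero_iff.mpr (nn_add_nat hγ j)
      have hn : ((j:ℝ)+1) ≠ 0 := by positivity
      simp only [Pi.div_apply]
      field_simp
    have h := (t1.mul t2).mul_const ‖θ‖
    simpa using h

lemma gauss_contig (b B C : ℂ) (θ : ℂ) (hθ : ‖θ‖ < 1)
    (hC : notNonposInt C) (hC1 : notNonposInt (C - 1)) :
    (C - b - 1) * GaussF b B C θ = (C - 1) * GaussF b B (C - 1) θ - b * GaussF (b+1) B C θ := by
  unfold GaussF
  rw [← tsum_mul_left, ← tsum_mul_left, ← tsum_mul_left,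
    ← Summable.tsum_sub ((summable_gauss b B (C-1) θ hθ hC1).mul_left (C-1))
      ((summable_gauss (b+1) B C θ hθ hC).mul_left b)]
  apply tsum_congr
  intro j
  have h1 : poch C j ≠ 0 := poch_ne_zero hC j
  have h2 : poch (C-1) j ≠ 0 := poch_ne_zero hC1 j
  have h3 : ((j.factorial : ℂ)) ≠ 0 := Nat.cast_ne_zero.mpr j.factorial_ne_zero
  have r1 : (C-1) * poch C j = poch (C-1) j * (C - 1 + j) := by
    have h := poch_shift (C-1) j
    rw [show C - 1 + 1 = C by ring] at h
    exact h
  have r2 : b * poch (b+1) j = poch b j * (b + j) := poch_shift b j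
  have e1 : (C-1) * (poch b j * poch B j / ((j.factorial:ℂ) * poch (C-1) j) * θ^j)
      = (C-1+j) * (poch b j * poch B j / ((j.factorial:ℂ) * poch C j) * θ^j) := by
    field_simp
    linear_combination (poch b j * poch B j * θ^j) * r1
  have e2 : b * (poch (b+1) j * poch B j / ((j.factorial:ℂ) * poch C j) * θ^j)
      = (b+j) * (poch b j * poch B j / ((j.factorial:ℂ) * poch C j) * θ^j) := by
    rw [show b * (poch (b+1) j * poch B j / ((j.factorial:ℂ) * poch C j) * θ^j)
      = (b * poch (b+1) j) * (poch B j / ((j.factorial:ℂ) * poch C j) * θ^j) by ring, r2]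
    ring
  rw [e1, e2]
  ring

lemma norm_cast_ge_sub (x : ℂ) (s : ℕ) : (s:ℝ) - ‖x‖ ≤ ‖x + s‖ := by
  have h := norm_sub_norm_le ((s:ℂ)) (-x)
  rw [sub_neg_eq_add, norm_neg, Complex.norm_natCast] at h
  calc (s:ℝ) - ‖x‖ ≤ ‖(s:ℂ) + x‖ := h
    _ = ‖x + s‖ := by rw [add_comm]

lemma poch_lower (E : ℂ) (hE : notNonposInt E) :
    ∃ δ : ℝ, 0 < δ ∧ ∀ s : ℕ, δ ≤ ‖E + s‖ := by
  classical
  set s₀ := ⌈‖E‖⌉₊ with hs₀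
  have hne : (Finset.range (s₀+1)).Nonempty := ⟨0, by simp⟩
  refine ⟨min 1 ((Finset.range (s₀+1)).inf' hne (fun i => ‖E + i‖)), ?_, ?_⟩
  · apply lt_min one_pos
    rw [Finset.lt_inf'_iff]
    intro i _
    rw [norm_pos_iff]
    exact nn_add_nat hE i
  · intro s
    by_cases hs : s < s₀ + 1
    · exact le_trans (min_le_right _ _) (Finset.inf'_le _ (Finset.mem_range.mpr hs))
    · push_neg at hs
      have h1 := norm_cast_ge_sub E s
      have h2 : ‖E‖ ≤ (s₀ : ℝ) := Nat.le_ceil _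
      have h3 : (s₀:ℝ) + 1 ≤ (s:ℝ) := by exact_mod_cast hs
      exact le_trans (min_le_left _ _) (by linarith)

set_option maxHeartbeats 1000000 in
lemma gauss_bound (bb B C : ℂ) (θ : ℂ) (hθ : ‖θ‖ < 1) (hC : notNonposInt C) :
    ∃ M : ℝ, 0 ≤ M ∧ ∀ n : ℕ, ‖GaussF bb (B + n) (C + n) θ‖ ≤ M := by
  set t := ‖θ‖ with ht
  have ht0 : 0 ≤ t := norm_nonneg _
  set s := ⌈‖C‖⌉₊ with hs
  set qb := ⌈‖bb‖⌉₊ with hqb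
  set qR := ⌈‖B - C‖⌉₊ + 1 with hqR
  set Q := qb + qR with hQ
  have hG0 : ∀ j : ℕ, 0 ≤ ((j:ℝ)+1)^Q * t^j := fun j => by positivity
  have hGsum : Summable (fun j : ℕ => ((j:ℝ)+1)^Q * t^j) := by
    have h := summable_pow_mul_geometric_of_norm_lt_one (R := ℝ) Q (r := t)
      (by rwa [Real.norm_eq_abs, _root_.abs_of_nonneg ht0])
    have h2 : Summable (fun j : ℕ => (((j+1:ℕ)):ℝ)^Q * t^(j+1)) := (summable_nat_add_iff 1).mpr h
    by_cases htz : t = 0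
    · apply summable_of_ne_finset_zero (s := {0})
      intro j hj
      have hj0 : j ≠ 0 := by simpa using hj
      simp [htz, zero_pow hj0]
    · apply (h2.mul_left t⁻¹).congr
      intro j
      push_cast
      field_simp
      ring
  set M₀ := ∑' j : ℕ, ((j:ℝ)+1)^Q * t^j with hM₀d
  have hM₀ : 0 ≤ M₀ := tsum_nonneg hG0
  have hterm : ∀ n : ℕ, s + 1 ≤ n → ∀ j : ℕ,
      ‖poch bb j * poch (B+(n:ℂ)) j / ((j.factorial:ℂ) * poch (C+(n:ℂ)) j) * θ^j‖ ≤ ((j:ℝ)+1)^Q * t^j := by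
    intro n hn j
    have hCn : ∀ i : ℕ, ((1:ℝ)+i) ≤ ‖C + (n:ℂ) + i‖ := by
      intro i
      have h1 : ((n+i : ℕ):ℝ) - ‖C‖ ≤ ‖C + ((n+i:ℕ):ℂ)‖ := norm_cast_ge_sub C (n+i)
      have h2 : ‖C‖ ≤ (s:ℝ) := Nat.le_ceil _
      have h3 : (s:ℝ) + 1 ≤ (n:ℝ) := by exact_mod_cast hn
      have h4 : C + ((n+i:ℕ):ℂ) = C + (n:ℂ) + i := by push_cast; ring
      rw [h4] at h1
      push_cast at h1
      linarith
    have hpos : (0:ℝ) < ‖poch (C+(n:ℂ)) j‖ := by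
      rw [norm_pos_iff]
      exact poch_ne_zero (nn_shift hC n) j
    have h1 : ‖poch bb j‖ ≤ (j.factorial:ℝ) * ((j:ℝ)+1)^qb := by
      rw [norm_poch_eq]
      calc ∏ i ∈ range j, ‖bb + i‖ ≤ ∏ i ∈ range j, (‖bb‖ + i) := by
            apply Finset.prod_le_prod (fun i _ => norm_nonneg _)
            intro i _
            calc ‖bb + i‖ ≤ ‖bb‖ + ‖(i:ℂ)‖ := norm_add_le _ _
              _ = ‖bb‖ + i := by rw [Complex.norm_natCast]
        _ ≤ (j.factorial:ℝ) * ((j:ℝ)+1)^qb :=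
            prod_le_factorial_mul_pow ‖bb‖ (norm_nonneg _) qb (Nat.le_ceil _) j
    have h2 : ‖poch (B+(n:ℂ)) j‖ ≤ ‖poch (C+(n:ℂ)) j‖ * ((j:ℝ)+1)^qR := by
      rw [norm_poch_eq, norm_poch_eq]
      have hfac : ∀ i ∈ range j, ‖B + (n:ℂ) + i‖ ≤ ‖C + (n:ℂ) + i‖ * ((1 + ‖B-C‖ + i)/(1+i)) := by
        intro i _
        have hy : (0:ℝ) < 1 + i := by positivity
        have ha : ‖B + (n:ℂ) + i‖ ≤ ‖C + (n:ℂ) + i‖ + ‖B - C‖ := by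
          have h := norm_add_le (C + (n:ℂ) + i) (B - C)
          rw [show C + (n:ℂ) + i + (B - C) = B + (n:ℂ) + i by ring] at h
          exact h
        rw [← mul_div_assoc, le_div_iff₀ hy]
        nlinarith [hCn i, norm_nonneg (B - C), norm_nonneg (C + (n:ℂ) + (i:ℂ))]
      calc ∏ i ∈ range j, ‖B + (n:ℂ) + i‖
          ≤ ∏ i ∈ range j, (‖C + (n:ℂ) + i‖ * ((1 + ‖B-C‖ + i)/(1+i))) :=
            Finset.prod_le_prod (fun i _ => norm_nonneg _) hfac
        _ = (∏ i ∈ range j, ‖C + (n:ℂ) + i‖) * ((∏ i ∈ range j, (1 + ‖B-C‖ + i)) / ∏ i ∈ range j, ((1:ℝ)+i)) := by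
            rw [prod_mul_distrib, prod_div_distrib]
        _ ≤ (∏ i ∈ range j, ‖C + (n:ℂ) + i‖) * ((j:ℝ)+1)^qR := by
            apply mul_le_mul_of_nonneg_left _ (prod_nonneg fun i _ => norm_nonneg _)
            have hd : (∏ i ∈ range j, ((1:ℝ)+i)) = (j.factorial : ℝ) := by
              calc ∏ i ∈ range j, ((1:ℝ)+i) = ∏ i ∈ range j, (((i+1:ℕ)):ℝ) :=
                    Finset.prod_congr rfl (fun i _ => by push_cast; ring)
                _ = ((∏ i ∈ range j, (i+1) : ℕ):ℝ) := by rw [Nat.cast_prod]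
                _ = (j.factorial:ℝ) := by rw [Finset.prod_range_add_one_eq_factorial]
            rw [hd, div_le_iff₀ (by positivity : (0:ℝ) < (j.factorial:ℝ))]
            calc ∏ i ∈ range j, (1 + ‖B-C‖ + i) = ∏ i ∈ range j, ((1 + ‖B-C‖) + i) := by
                  apply Finset.prod_congr rfl; intro i _; ring
              _ ≤ (j.factorial:ℝ) * ((j:ℝ)+1)^qR := by
                  apply prod_le_factorial_mul_pow (1 + ‖B-C‖) (by positivity) qR
                  have := Nat.le_ceil ‖B - C‖
                  push_cast [hqR]
                  linarith
              _ = ((j:ℝ)+1)^qR * (j.factorial:ℝ) := by ring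
    -- combine
    have hfj : (0:ℝ) < (j.factorial:ℝ) := by positivity
    simp only [norm_mul, norm_div, norm_pow, Complex.norm_natCast]
    calc ‖poch bb j‖ * ‖poch (B+(n:ℂ)) j‖ / ((j.factorial:ℝ) * ‖poch (C+(n:ℂ)) j‖) * t^j
        ≤ ((j.factorial:ℝ) * ((j:ℝ)+1)^qb) * (‖poch (C+(n:ℂ)) j‖ * ((j:ℝ)+1)^qR)
            / ((j.factorial:ℝ) * ‖poch (C+(n:ℂ)) j‖) * t^j := by
          gcongr
      _ = ((j:ℝ)+1)^Q * t^j := by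
          rw [div_mul_eq_mul_div, div_eq_iff (by positivity : ((j.factorial:ℝ) * ‖poch (C+(n:ℂ)) j‖) ≠ 0), hQ, pow_add]
          ring
  have hbig : ∀ n : ℕ, s + 1 ≤ n → ‖GaussF bb (B+(n:ℂ)) (C+(n:ℂ)) θ‖ ≤ M₀ := by
    intro n hn
    have hsum : Summable (fun j => ‖poch bb j * poch (B+(n:ℂ)) j / ((j.factorial:ℂ) * poch (C+(n:ℂ)) j) * θ^j‖) :=
      Summable.of_nonneg_of_le (fun _ => norm_nonneg _) (hterm n hn) hGsum
    calc ‖GaussF bb (B+(n:ℂ)) (C+(n:ℂ)) θ‖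
        ≤ ∑' j, ‖poch bb j * poch (B+(n:ℂ)) j / ((j.factorial:ℂ) * poch (C+(n:ℂ)) j) * θ^j‖ :=
          norm_tsum_le_tsum_norm hsum
      _ ≤ M₀ := Summable.tsum_le_tsum (hterm n hn) hsum hGsum
  refine ⟨M₀ + ∑ n ∈ range (s+1), ‖GaussF bb (B+(n:ℂ)) (C+(n:ℂ)) θ‖, by positivity, ?_⟩
  intro n
  by_cases hn : s + 1 ≤ n
  · have h := hbig n hn
    have h2 : (0:ℝ) ≤ ∑ n ∈ range (s+1), ‖GaussF bb (B+(n:ℂ)) (C+(n:ℂ)) θ‖ :=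
      Finset.sum_nonneg fun i _ => norm_nonneg _
    linarith
  · push_neg at hn
    have h := Finset.single_le_sum (f := fun i : ℕ => ‖GaussF bb (B+(i:ℂ)) (C+(i:ℂ)) θ‖)
      (fun i _ => norm_nonneg _) (Finset.mem_range.mpr hn)
    linarith

set_option maxHeartbeats 1000000 in
lemma summable_psi0 (p : ℕ) (hp : p ≤ 1) (a c a' c' σ ρ E d bb θ : ℂ)
    (hσ : ‖σ‖ < 1) (hθ : ‖θ‖ < 1) (hE : notNonposInt E) (hc' : notNonposInt c') :
    Summable (fun mk : ℕ × ℕ =>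
      poch a mk.1 * poch c mk.1 * poch a' (p * mk.2) * poch 1 (0 * (mk.1 + mk.2)) /
        ((mk.1.factorial : ℂ) * (mk.2.factorial : ℂ) * poch E (mk.1 + mk.2) *
          poch c' (p * mk.2) * poch 1 (0 * (mk.1 + mk.2))) *
        GaussF bb (E - d + (mk.1 : ℂ) + (mk.2 : ℂ)) (E + (mk.1 : ℂ) + (mk.2 : ℂ)) θ *
        σ ^ mk.1 * ρ ^ mk.2) := by
  obtain ⟨M, hM0, hM⟩ := gauss_bound bb (E - d) E θ hθ hE
  obtain ⟨δ, hδ0, hδ⟩ := poch_lower E hE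
  have hM2 : ∀ m k : ℕ, ‖GaussF bb (E - d + (m:ℂ) + (k:ℂ)) (E + (m:ℂ) + (k:ℂ)) θ‖ ≤ M := by
    intro m k
    have h := hM (m+k)
    have e1 : E - d + ((m+k : ℕ):ℂ) = E - d + (m:ℂ) + (k:ℂ) := by push_cast; ring
    have e2 : E + ((m+k : ℕ):ℂ) = E + (m:ℂ) + (k:ℂ) := by push_cast; ring
    rwa [e1, e2] at h
  -- u series
  have hu : Summable (fun m : ℕ => poch a m * poch c m / ((m.factorial:ℂ) * poch E m) * σ^m) :=
    summable_gauss a c E σ hσ hE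
  -- v series
  set x : ℝ := ‖ρ‖ / δ with hx
  have hx0 : 0 ≤ x := by positivity
  have hv : Summable (fun k : ℕ => poch a' (p*k) / ((k.factorial:ℂ) * poch c' (p*k)) * ((x:ℂ))^k) := by
    interval_cases p
    · simp only [Nat.zero_mul, poch_eval_zero]
      rw [← summable_norm_iff]
      apply ((Real.summable_pow_div_factorial x).congr (fun k => ?_))
      simp only [norm_mul, norm_div, norm_pow, Complex.norm_natCast, Complex.norm_real,
        Real.norm_eq_abs, _root_.abs_of_nonneg hx0, norm_one]
      ring
    · simp only [Nat.one_mul, one_mul]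
      apply summable_of_ratio_tendsto (L := 0) one_pos
        (g := fun k => (‖a'+(k:ℂ)‖/((k:ℝ)+1)) * (1/‖c'+(k:ℂ)‖) * x)
      · intro n
        have h1 : poch c' n ≠ 0 := poch_ne_zero hc' n
        have h2 : c' + (n:ℂ) ≠ 0 := nn_add_nat hc' n
        have h3 : ((n.factorial : ℂ)) ≠ 0 := Nat.cast_ne_zero.mpr n.factorial_ne_zero
        have h4 : ((n:ℂ)+1) ≠ 0 := by
          have := Nat.cast_add_one_ne_zero (R := ℂ) n
          push_cast at this ⊢
          exact this
        have key : poch a' (n+1) / (((n+1).factorial:ℂ) * poch c' (n+1)) * ((x:ℂ))^(n+1)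
            = poch a' n / ((n.factorial:ℂ) * poch c' n) * ((x:ℂ))^n
              * ((a'+(n:ℂ)) * (x:ℂ) / (((n:ℂ)+1) * (c'+(n:ℂ)))) := by
          rw [poch_succ, poch_succ, Nat.factorial_succ, pow_succ]
          push_cast
          field_simp
        rw [key]
        simp only [norm_mul, norm_div, norm_natCast_add_one, Complex.norm_real,
          Real.norm_eq_abs, _root_.abs_of_nonneg hx0]
        have hz : ‖c' + (n:ℂ)‖ ≠ 0 := norm_ne_zero_iff.mpr h2
        have hn1 : ((n:ℝ)+1) ≠ 0 := by positivity
        field_simp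
      · have t1 := tendsto_norm_add_div a'
        have t3 := tendsto_inv_norm_add c'
        have h := (t1.mul t3).mul_const x
        simpa using h
  -- comparison
  rw [← summable_norm_iff]
  apply Summable.of_nonneg_of_le (fun _ => norm_nonneg _)
    (f := fun mk : ℕ × ℕ =>
      (M * ‖poch a mk.1 * poch c mk.1 / ((mk.1.factorial:ℂ) * poch E mk.1) * σ^mk.1‖) *
        ‖poch a' (p*mk.2) / ((mk.2.factorial:ℂ) * poch c' (p*mk.2)) * ((x:ℂ))^mk.2‖)
  · intro mk
    obtain ⟨m, k⟩ := mk
    simp only [Nat.zero_mul, poch_eval_zero, mul_one]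
    have hpE : ∀ l : ℕ, poch E l ≠ 0 := poch_ne_zero hE
    have hpc' : poch c' (p*k) ≠ 0 := poch_ne_zero hc' _
    have hPm : (0:ℝ) < ‖poch E m‖ := norm_pos_iff.mpr (hpE m)
    have hPn : ‖poch E m‖ * δ^k ≤ ‖poch E (m+k)‖ := by
      rw [poch_add, norm_mul]
      apply mul_le_mul_of_nonneg_left _ (norm_nonneg _)
      rw [norm_poch_eq]
      calc δ^k = ∏ _i ∈ range k, δ := by rw [prod_const, card_range]
        _ ≤ ∏ i ∈ range k, ‖E + (m:ℂ) + i‖ := by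
            apply Finset.prod_le_prod (fun _ _ => hδ0.le)
            intro i _
            have h := hδ (m+i)
            have e : E + ((m+i:ℕ):ℂ) = E + (m:ℂ) + i := by push_cast; ring
            rwa [e] at h
    simp only [norm_mul, norm_div, norm_pow, Complex.norm_natCast, Complex.norm_real,
      Real.norm_eq_abs, _root_.abs_of_nonneg hx0]
    have hfm : (0:ℝ) < (m.factorial:ℝ) := by positivity
    have hfk : (0:ℝ) < (k.factorial:ℝ) := by positivity
    have hQc' : (0:ℝ) < ‖poch c' (p*k)‖ := norm_pos_iff.mpr hpc'
    have hδk : (0:ℝ) < δ^k := by positivity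
    calc ‖poch a m‖ * ‖poch c m‖ * ‖poch a' (p*k)‖ /
          ((m.factorial:ℝ) * (k.factorial:ℝ) * ‖poch E (m+k)‖ * ‖poch c' (p*k)‖) *
          ‖GaussF bb (E - d + (m:ℂ) + (k:ℂ)) (E + (m:ℂ) + (k:ℂ)) θ‖ * ‖σ‖^m * ‖ρ‖^k
        ≤ ‖poch a m‖ * ‖poch c m‖ * ‖poch a' (p*k)‖ /
          ((m.factorial:ℝ) * (k.factorial:ℝ) * (‖poch E m‖ * δ^k) * ‖poch c' (p*k)‖) *
          M * ‖σ‖^m * ‖ρ‖^k := by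
          gcongr
          · exact hM2 m k
      _ = (M * (‖poch a m‖ * ‖poch c m‖ / ((m.factorial:ℝ) * ‖poch E m‖) * ‖σ‖^m)) *
          (‖poch a' (p*k)‖ / ((k.factorial:ℝ) * ‖poch c' (p*k)‖) * x^k) := by
          rw [hx, div_pow]
          field_simp
  · exact Summable.mul_of_nonneg
      (f := fun m : ℕ => M * ‖poch a m * poch c m / ((m.factorial:ℂ) * poch E m) * σ^m‖)
      (g := fun k : ℕ => ‖poch a' (p*k) / ((k.factorial:ℂ) * poch c' (p*k)) * ((x:ℂ))^k‖)
      ((summable_norm_iff.mpr hu).mul_left M) (summable_norm_iff.mpr hv)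
      (fun m => by positivity) (fun k => norm_nonneg _)

lemma psi_alg (Pa Pc Pa' Pb Pb1 Pe Pe1 Pc' fm fk G G1 G2 sm rk b e C : ℂ)
    (hPe : Pe ≠ 0) (hPe1 : Pe1 ≠ 0) (hPb1 : Pb1 ≠ 0) (hPc' : Pc' ≠ 0)
    (hfm : fm ≠ 0) (hfk : fk ≠ 0)
    (hr1 : (e - b - 1) * Pb = Pb1 * (C - b - 1))
    (hr2 : (e - 1) * Pe = Pe1 * (C - 1))
    (hrel : (C - b - 1) * G = (C - 1) * G1 - b * G2) :
    (e - b - 1) * (Pa * Pc * Pa' * Pb / (fm * fk * Pe * Pc' * Pb1) * G * sm * rk) =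
      (e - 1) * (Pa * Pc * Pa' / (fm * fk * Pe1 * Pc') * G1 * sm * rk) -
        b * (Pa * Pc * Pa' / (fm * fk * Pe * Pc') * G2 * sm * rk) := by
  have c1 : (e-b-1) * (Pa * Pc * Pa' * Pb / (fm * fk * Pe * Pc' * Pb1) * G * sm * rk)
      = (C - b - 1) * G * (Pa * Pc * Pa' / (fm * fk * Pe * Pc') * sm * rk) := by
    field_simp
    linear_combination (Pa * Pc * Pa' * G * sm * rk) * hr1
  have c2 : (e-1) * (Pa * Pc * Pa' / (fm * fk * Pe1 * Pc') * G1 * sm * rk)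
      = (C - 1) * G1 * (Pa * Pc * Pa' / (fm * fk * Pe * Pc') * sm * rk) := by
    field_simp
    linear_combination (Pa * Pc * Pa' * G1 * sm * rk) * hr2
  have c3 : b * (Pa * Pc * Pa' / (fm * fk * Pe * Pc') * G2 * sm * rk)
      = b * G2 * (Pa * Pc * Pa' / (fm * fk * Pe * Pc') * sm * rk) := by ring
  rw [c1, c2, c3]
  linear_combination (Pa * Pc * Pa' / (fm * fk * Pe * Pc') * sm * rk) * hrel

set_option maxHeartbeats 1000000 in
/-- Contiguous relation (12) for the `Ψ` functions. -/
theorem Psi_contiguous_12 (p : ℕ) (hp : p ≤ 1)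
    (a b c d a' e c' σ ρ : ℂ) (θ : ℝ)
    (hσ : ‖σ‖ < 1) (hθ : |θ| < 1)
    (he : notNonposInt e) (he1 : notNonposInt (e - 1))
    (hc' : notNonposInt c') (heb1 : notNonposInt (e - b - 1)) :
    (e - b - 1) * PsiPQ p 1 a b c d a' (e - b) e c' (e - b - 1) σ (θ : ℂ) ρ =
      (e - 1) * PsiPQ p 0 a b c (d - 1) a' 1 (e - 1) c' 1 σ (θ : ℂ) ρ -
        b * PsiPQ p 0 a (b + 1) c d a' 1 e c' 1 σ (θ : ℂ) ρ := by
  have hθ' : ‖(θ:ℂ)‖ < 1 := by rw [Complex.norm_real, Real.norm_eq_abs]; exact hθ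
  have hS1 := summable_psi0 p hp a c a' c' σ ρ (e-1) (d-1) b (θ:ℂ) hσ hθ' he1 hc'
  have hS2 := summable_psi0 p hp a c a' c' σ ρ e d (b+1) (θ:ℂ) hσ hθ' he hc'
  unfold PsiPQ
  rw [← tsum_mul_left, ← tsum_mul_left, ← tsum_mul_left,
    ← Summable.tsum_sub (hS1.mul_left (e-1)) (hS2.mul_left b)]
  apply tsum_congr
  rintro ⟨m, k⟩
  dsimp only
  simp only [one_mul, zero_mul, poch_eval_zero, mul_one]
  have hn1 : poch e (m+k) ≠ 0 := poch_ne_zero he _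
  have hn2 : poch (e-1) (m+k) ≠ 0 := poch_ne_zero he1 _
  have hn3 : poch (e-b-1) (m+k) ≠ 0 := poch_ne_zero heb1 _
  have hn4 : poch c' (p*k) ≠ 0 := poch_ne_zero hc' _
  have hfm : ((m.factorial:ℂ)) ≠ 0 := Nat.cast_ne_zero.mpr m.factorial_ne_zero
  have hfk : ((k.factorial:ℂ)) ≠ 0 := Nat.cast_ne_zero.mpr k.factorial_ne_zero
  have hC : notNonposInt (e + (m:ℂ) + (k:ℂ)) := by
    have h := nn_shift he (m+k)
    have h2 : (e + ((m+k:ℕ):ℂ)) = e + (m:ℂ) + (k:ℂ) := by push_cast; ring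
    rwa [h2] at h
  have hC1 : notNonposInt (e + (m:ℂ) + (k:ℂ) - 1) := by
    have h := nn_shift he1 (m+k)
    have h2 : (e - 1 + ((m+k:ℕ):ℂ)) = e + (m:ℂ) + (k:ℂ) - 1 := by push_cast; ring
    rwa [h2] at h
  have hrel := gauss_contig b (e-d+(m:ℂ)+(k:ℂ)) (e+(m:ℂ)+(k:ℂ)) (θ:ℂ) hθ' hC hC1
  rw [show e-1-(d-1)+(m:ℂ)+(k:ℂ) = e-d+(m:ℂ)+(k:ℂ) from by ring,
      show e-1+(m:ℂ)+(k:ℂ) = e+(m:ℂ)+(k:ℂ)-1 from by ring]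
  have hr1 : (e - b - 1) * poch (e-b) (m+k) = poch (e-b-1) (m+k) * ((e+(m:ℂ)+(k:ℂ)) - b - 1) := by
    have h := poch_shift (e-b-1) (m+k)
    rw [show e-b-1+1 = e-b from by ring] at h
    rw [h]
    push_cast
    ring
  have hr2 : (e - 1) * poch e (m+k) = poch (e-1) (m+k) * ((e+(m:ℂ)+(k:ℂ)) - 1) := by
    have h := poch_shift (e-1) (m+k)
    rw [show e-1+1 = e from by ring] at h
    rw [h]
    push_cast
    ring
  exact psi_alg _ _ _ _ _ _ _ _ _ _ _ _ _ _ _ b e (e+(m:ℂ)+(k:ℂ))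
    hn1 hn2 hn3 hn4 hfm hfk hr1 hr2 hrel
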